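/- For w an odd nonzero integer and integers u, n, the generalized quadratic Gauss sums satisfy S(u, 2n-uw, w) = exp(2πi(-(w-1)(w+1)u/8 + (w-1)n/2)/w) · S(u, 2n-u, w). -/
import Mathlib

open Complex Finset

private lemma sum_shift (f : ℤ → ℂ) (N : ℕ)
    (hper : ∀ a b : ℤ, (N:ℤ) ∣ (a - b) → f a = f b) (m : ℤ) :
    ∑ k ∈ Finset.range N, f ((k : ℤ) + m) = ∑ k ∈ Finset.range N, f (k : ℤ) := by
  rcases Nat.eq_zero_or_pos N with h0 | h0
  · simp [h0]
  have hN0 : (0:ℤ) < (N:ℤ) := by exact_mod_cast h0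
  have hNz : (N:ℤ) ≠ 0 := hN0.ne'
  refine Finset.sum_nbij' (fun k => (((k:ℤ) + m) % N).toNat)
    (fun k => (((k:ℤ) - m) % N).toNat) ?_ ?_ ?_ ?_ ?_
  · intro a _
    have h1 := Int.emod_nonneg ((a:ℤ) + m) hNz
    have h2 := Int.emod_lt_of_pos ((a:ℤ) + m) hN0
    simp only [Finset.mem_range]
    omega
  · intro a _
    have h1 := Int.emod_nonneg ((a:ℤ) - m) hNz
    have h2 := Int.emod_lt_of_pos ((a:ℤ) - m) hN0
    simp only [Finset.mem_range]
    omega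
  · intro a ha
    simp only [Finset.mem_range] at ha
    have h1 := Int.emod_nonneg ((a:ℤ) + m) hNz
    have key : ((((((a:ℤ) + m) % N).toNat : ℤ)) - m) % N = (a:ℤ) := by
      rw [Int.toNat_of_nonneg h1, Int.sub_emod, Int.emod_emod_of_dvd _ dvd_rfl,
        ← Int.sub_emod, add_sub_cancel_right,
        Int.emod_eq_of_lt (by positivity) (by exact_mod_cast ha)]
    show (((((((a:ℤ) + m) % N).toNat : ℤ)) - m) % N).toNat = a
    omega
  · intro a ha
    simp only [Finset.mem_range] at ha
    have h1 := Int.emod_nonneg ((a:ℤ) - m) hNz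
    have key : ((((((a:ℤ) - m) % N).toNat : ℤ)) + m) % N = (a:ℤ) := by
      rw [Int.toNat_of_nonneg h1, Int.add_emod, Int.emod_emod_of_dvd _ dvd_rfl,
        ← Int.add_emod, sub_add_cancel,
        Int.emod_eq_of_lt (by positivity) (by exact_mod_cast ha)]
    show (((((((a:ℤ) - m) % N).toNat : ℤ)) + m) % N).toNat = a
    omega
  · intro a _
    apply hper
    show ((N:ℤ)) ∣ ((a:ℤ) + m) - ((((a:ℤ) + m) % N).toNat : ℤ)
    have h1 := Int.emod_nonneg ((a:ℤ) + m) hNz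
    rw [Int.toNat_of_nonneg h1]
    exact ⟨((a:ℤ) + m) / N, by rw [Int.emod_def]; ring⟩

private lemma exp_term_congr (u v w a b : ℤ) (hw : w ≠ 0) (hpar : Even (u * w + v))
    (hab : w ∣ (a - b)) :
    Complex.exp ((Real.pi : ℂ) * Complex.I * (((u:ℂ) * (a:ℂ)^2 + (v:ℂ) * (a:ℂ)) / (w:ℂ))) =
    Complex.exp ((Real.pi : ℂ) * Complex.I * (((u:ℂ) * (b:ℂ)^2 + (v:ℂ) * (b:ℂ)) / (w:ℂ))) := by
  obtain ⟨t, ht⟩ := hab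
  have ha : a = b + w * t := by linarith
  obtain ⟨s, hs⟩ : Even (u * w * t^2 + v * t + 2 * u * b * t) := by
    obtain ⟨c, hc⟩ := hpar
    have h2 : Even (t * (t - 1)) := by
      rcases Int.even_or_odd t with he | ho
      · exact he.mul_right _
      · exact ((ho.sub_odd odd_one)).mul_left _
    obtain ⟨d, hd⟩ := h2
    exact ⟨u * w * d + c * t + u * b * t, by linear_combination t * hc + u * w * hd⟩
  have hwC : (w:ℂ) ≠ 0 := by exact_mod_cast hw
  have hsC : (u:ℂ) * w * t^2 + v * t + 2 * u * b * t = (s:ℂ) + (s:ℂ) := by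
    exact_mod_cast congrArg (Int.cast : ℤ → ℂ) hs
  have haC : (a:ℂ) = b + w * t := by exact_mod_cast congrArg (Int.cast : ℤ → ℂ) ha
  have hX : (u:ℂ) * (a:ℂ)^2 + (v:ℂ) * (a:ℂ) =
      ((u:ℂ) * (b:ℂ)^2 + (v:ℂ) * (b:ℂ)) + (w:ℂ) * ((s:ℂ) + (s:ℂ)) := by
    rw [haC]; linear_combination (w:ℂ) * hsC
  have key : (Real.pi : ℂ) * Complex.I * (((u:ℂ) * (a:ℂ)^2 + (v:ℂ) * (a:ℂ)) / (w:ℂ)) =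
      (s:ℂ) * (2 * (Real.pi:ℂ) * Complex.I) +
      (Real.pi : ℂ) * Complex.I * (((u:ℂ) * (b:ℂ)^2 + (v:ℂ) * (b:ℂ)) / (w:ℂ)) := by
    rw [hX]
    field_simp
    ring
  rw [key, Complex.exp_add, Complex.exp_int_mul_two_pi_mul_I, one_mul]

/-- Generalized quadratic Gauss sum `S(u,v,w) = ∑_{k=0}^{|w|-1} exp(iπ(uk² + vk)/w)`. -/
noncomputable def gaussS (u v w : ℤ) : ℂ :=
  ∑ k ∈ Finset.range w.natAbs,
    Complex.exp ((Real.pi : ℂ) * Complex.I *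
      (((u : ℂ) * (k : ℂ) ^ 2 + (v : ℂ) * (k : ℂ)) / (w : ℂ)))

/-- For `w` an odd nonzero integer and integers `u`, `n`,
`S(u, 2n-uw, w) = exp(2πi(-(w-1)(w+1)u/8 + (w-1)n/2)/w) · S(u, 2n-u, w)`. -/
theorem stmt_3 (w u n : ℤ) (hw : Odd w) (hw0 : w ≠ 0) :
    gaussS u (2 * n - u * w) w =
      Complex.exp (2 * (Real.pi : ℂ) * Complex.I *
        ((-(((w : ℂ) - 1) * ((w : ℂ) + 1) * (u : ℂ) / 8) + ((w : ℂ) - 1) * (n : ℂ) / 2)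
          / (w : ℂ))) *
      gaussS u (2 * n - u) w := by
  obtain ⟨m, hm⟩ : ∃ m : ℤ, w = 2 * m + 1 := hw
  have hwC : (w:ℂ) ≠ 0 := by exact_mod_cast hw0
  have hmC : (w:ℂ) = 2 * (m:ℂ) + 1 := by exact_mod_cast congrArg (Int.cast : ℤ → ℂ) hm
  set f : ℤ → ℂ := fun a =>
    Complex.exp ((Real.pi : ℂ) * Complex.I *
      (((u:ℂ) * (a:ℂ)^2 + (((2 * n - u * w : ℤ)):ℂ) * (a:ℂ)) / (w:ℂ))) with hf
  have hper : ∀ a b : ℤ, ((w.natAbs : ℤ)) ∣ (a - b) → f a = f b := by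
    intro a b hab
    exact exp_term_congr u (2 * n - u * w) w a b hw0 ⟨n, by ring⟩ (Int.natAbs_dvd.mp hab)
  have step1 : gaussS u (2 * n - u * w) w = ∑ k ∈ Finset.range w.natAbs, f ((k:ℤ) + m) := by
    rw [(sum_shift f w.natAbs hper m)]
    unfold gaussS
    apply Finset.sum_congr rfl
    intro k _
    simp only [hf, Int.cast_natCast]
  rw [step1]
  unfold gaussS
  rw [Finset.mul_sum]
  apply Finset.sum_congr rfl
  intro k _
  simp only [hf]
  rw [← Complex.exp_add]
  congr 1
  push_cast
  rw [hmC]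
  have h2 : (2 * (m:ℂ) + 1) ≠ 0 := by rw [← hmC]; exact hwC
  field_simp
  ring
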